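/- Let G be a non-abelian, irreducible subgroup of PL_o(ℝ) such that every element of im λ ∪ im ρ is a translation, and let τ_ℓ, τ_r : G → ℝ send g to the amplitudes of the translations λ(g) and ρ(g), respectively. If τ_ℓ is non-zero then [τ_ℓ] ∉ Σ¹(G); similarly, if τ_r is non-zero then [−τ_r] ∉ Σ¹(G). -/

import Mathlib

open Set

/-- A map `g : ℝ → ℝ` is *finitary piecewise linear* if there is a finite set of
breakpoints outside of which `g` is locally affine. -/
def IsFinitaryPL (g : ℝ → ℝ) : Prop :=
  ∃ B : Finset ℝ, ∀ t : ℝ, t ∉ B →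
    ∃ m b : ℝ, ∃ ε : ℝ, 0 < ε ∧ ∀ u : ℝ, |u - t| < ε → g u = m * u + b

/-- The support of a map of the real line. -/
def suppOf (g : ℝ → ℝ) : Set ℝ := {t : ℝ | g t ≠ t}

/-- `PLo I` is the set of orientation-preserving (i.e. strictly increasing) finitary
piecewise linear homeomorphisms of `ℝ` with support contained in `I`. -/
def PLo (I : Set ℝ) : Set (Equiv.Perm ℝ) :=
  {g : Equiv.Perm ℝ | StrictMono ⇑g ∧ IsFinitaryPL ⇑g ∧ suppOf ⇑g ⊆ I}

/-- The right derivative of `g` at `a`. -/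
noncomputable def rightSlope (g : ℝ → ℝ) (a : ℝ) : ℝ := derivWithin g (Ici a) a

/-- The left derivative of `g` at `c`. -/
noncomputable def leftSlope (g : ℝ → ℝ) (c : ℝ) : ℝ := derivWithin g (Iic c) c

/-- The amplitude of the translation with which `g` coincides near `+∞`. -/
noncomputable def amplTop (g : ℝ → ℝ) : ℝ :=
  Filter.limUnder Filter.atTop (fun t => g t - t)

/-- The amplitude of the translation with which `g` coincides near `-∞`. -/
noncomputable def amplBot (g : ℝ → ℝ) : ℝ :=
  Filter.limUnder Filter.atBot (fun t => g t - t)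

/-- A character of a group is a homomorphism into `(ℝ, +)`. -/
def IsChar {Γ : Type*} [Group Γ] (χ : Γ → ℝ) : Prop :=
  ∀ g h : Γ, χ (g * h) = χ g + χ h

/-- Two characters lie on the same ray: `ψ` is a positive multiple of `χ`. -/
def SameRayChar {Γ : Type*} (χ ψ : Γ → ℝ) : Prop :=
  ∃ r : ℝ, 0 < r ∧ ∀ g : Γ, ψ g = r * χ g

/-- The subgraph `Γ(G, X)_χ` of the Cayley graph of `G` with respect to the generating
set `X`, spanned by the vertices `g` with `χ g ≥ 0`, is connected. -/
def CayleyConnected {Γ : Type*} [Group Γ] (X : Set Γ) (χ : Γ → ℝ) : Prop :=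
  ∀ g h : Γ, 0 ≤ χ g → 0 ≤ χ h →
    Relation.ReflTransGen
      (fun u v : Γ => 0 ≤ χ u ∧ 0 ≤ χ v ∧ ∃ x ∈ X, v = u * x ∨ u = v * x) g h

/-- `[χ] ∈ Σ¹(G)`: for every generating set `X` of `G` the subgraph `Γ(G,X)_χ`
of the Cayley graph is connected. -/
def MemSigma1 {Γ : Type*} [Group Γ] (χ : Γ → ℝ) : Prop :=
  ∀ X : Set Γ, Subgroup.closure X = ⊤ → CayleyConnected X χ

/-- The character `χ_ℓ = ln ∘ σ_ℓ` of a subgroup `G` of `PL_o([a,c])`. -/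
noncomputable def chiL (G : Subgroup (Equiv.Perm ℝ)) (a : ℝ) : G → ℝ :=
  fun g => Real.log (rightSlope (⇑(g : Equiv.Perm ℝ)) a)

/-- The character `χ_r = ln ∘ σ_r` of a subgroup `G` of `PL_o([a,c])`. -/
noncomputable def chiR (G : Subgroup (Equiv.Perm ℝ)) (c : ℝ) : G → ℝ :=
  fun g => Real.log (leftSlope (⇑(g : Equiv.Perm ℝ)) c)

/-!
Pick `a` with `χ a > 0`; it is the translation by `χ a` on some half-line `(-∞, t₀]`. The elements
that are translations by their own character value on `(-∞, t₀]` generate the group: any element,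
after multiplication by a power of `a`, has non-positive character and is then conjugated by a
large power of `a` into that set. If `Γ_χ` is connected for this generating set, the property
"`g⁻¹` is the translation by `-χ g` on `(-∞, t₀]`" propagates along its edges from `1` to every
vertex, so `ker χ` acts trivially on `(-∞, t₀]`. As the group is non-abelian, `ker χ` contains a
non-trivial commutator, so the supremum of the points below which `ker χ` acts trivially is finite;
since `ker χ` is normal, that point is fixed by the whole group, against irreducibility.
The statement about `-τ_r` follows by conjugating with `t ↦ -t`.
-/

open Function

def IsTranslBelow (f : ℝ → ℝ) (k τ : ℝ) : Prop := ∀ t ≤ k, f t = t + τ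

namespace IsTranslBelow

variable {f : ℝ → ℝ} {k k' τ τ' : ℝ}

theorem mono (h : IsTranslBelow f k τ) (hk : k' ≤ k) : IsTranslBelow f k' τ :=
  fun t ht => h t (ht.trans hk)

theorem unique (h : IsTranslBelow f k τ) (h' : IsTranslBelow f k' τ') : τ = τ' := by
  have := (h _ (min_le_left k k')).symm.trans (h' _ (min_le_right k k'))
  linarith

theorem amplBot_eq (h : IsTranslBelow f k τ) : amplBot f = τ := by
  refine (tendsto_const_nhds.congr' ?_).limUnder_eq
  filter_upwards [Filter.eventually_le_atBot k] with t ht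
  rw [h t ht]
  ring

theorem one (k : ℝ) : IsTranslBelow ⇑(1 : Equiv.Perm ℝ) k 0 := fun t _ => by simp

theorem mul {f g : Equiv.Perm ℝ} {σ : ℝ} (hf : IsTranslBelow f k σ) (hg : IsTranslBelow g k' τ)
    (hk : k' + τ ≤ k) : IsTranslBelow ⇑(f * g) k' (σ + τ) := by
  intro t ht
  rw [Equiv.Perm.mul_apply, hg t ht, hf _ (by linarith)]
  ring

theorem inv {f : Equiv.Perm ℝ} (hf : IsTranslBelow f k τ) : IsTranslBelow ⇑f⁻¹ (k + τ) (-τ) := by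
  intro t ht
  rw [Equiv.Perm.inv_eq_iff_eq, hf _ (by linarith)]
  ring

theorem pow {f : Equiv.Perm ℝ} (hf : IsTranslBelow f k τ) (hτ : 0 ≤ τ) (n : ℕ) :
    IsTranslBelow ⇑(f ^ n) (k - n * τ) (n * τ) := by
  induction n with
  | zero => simpa using one k
  | succ n ih =>
    have hn : (0 : ℝ) ≤ n * τ := by positivity
    rw [pow_succ]
    convert ih.mul (hf.mono (k' := k - (n + 1 : ℕ) * τ) (by push_cast; linarith))
      (by push_cast; linarith) using 1
    push_cast
    ring

end IsTranslBelow

theorem amplTop_eq_of_forall_ge {f : ℝ → ℝ} {k τ : ℝ} (h : ∀ t, k ≤ t → f t = t + τ) :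
    amplTop f = τ := by
  refine (tendsto_const_nhds.congr' ?_).limUnder_eq
  filter_upwards [Filter.eventually_ge_atTop k] with t ht
  rw [h t ht]
  ring

namespace IsChar

variable {Γ : Type*} [Group Γ] {χ : Γ → ℝ}

theorem map_one (hχ : IsChar χ) : χ 1 = 0 := by
  have := hχ 1 1
  rw [one_mul] at this
  linarith

theorem map_inv (hχ : IsChar χ) (g : Γ) : χ g⁻¹ = -χ g := by
  have := hχ g g⁻¹
  rw [mul_inv_cancel, hχ.map_one] at this
  linarith

theorem map_pow (hχ : IsChar χ) (g : Γ) (n : ℕ) : χ (g ^ n) = n * χ g := by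
  induction n with
  | zero => simp [hχ.map_one]
  | succ n ih =>
    rw [pow_succ, hχ, ih]
    push_cast
    ring

def toMonoidHom (hχ : IsChar χ) : Γ →* Multiplicative ℝ :=
  MonoidHom.mk' (fun g => Multiplicative.ofAdd (χ g)) hχ

theorem mem_ker_toMonoidHom (hχ : IsChar χ) {g : Γ} : g ∈ hχ.toMonoidHom.ker ↔ χ g = 0 :=
  MonoidHom.mem_ker.trans ofAdd_eq_one

end IsChar

section Action

variable {Γ : Type*} [Group Γ] (ι : Γ →* Equiv.Perm ℝ) {χ : Γ → ℝ}

theorem isChar_of_isTranslBelow (htrans : ∀ g, ∃ k, IsTranslBelow (ι g) k (χ g)) : IsChar χ := by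
  intro g h
  obtain ⟨k₁, h₁⟩ := htrans g
  obtain ⟨k₂, h₂⟩ := htrans h
  obtain ⟨k, hgh⟩ := htrans (g * h)
  rw [map_mul] at hgh
  exact hgh.unique (h₁.mul (h₂.mono (min_le_left k₂ (k₁ - χ h)))
    (by linarith [min_le_right k₂ (k₁ - χ h)]))

theorem closure_isTranslBelow_eq_top (hχ : IsChar χ)
    (htrans : ∀ g, ∃ k, IsTranslBelow (ι g) k (χ g)) {a : Γ} {t₀ : ℝ}
    (ha : IsTranslBelow (ι a) t₀ (χ a)) (hpos : 0 < χ a) :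
    Subgroup.closure {x | IsTranslBelow (ι x) t₀ (χ x)} = ⊤ := by
  set X := {x | IsTranslBelow (ι x) t₀ (χ x)}
  have haX : a ∈ Subgroup.closure X := Subgroup.subset_closure ha
  refine eq_top_iff.2 fun g _ => ?_
  obtain ⟨n, hn⟩ := exists_nat_ge (χ g / χ a)
  set g' := g * (a ^ n)⁻¹ with hg'_def
  have hg' : χ g' ≤ 0 := by
    rw [hχ, hχ.map_inv, hχ.map_pow]
    linarith [(div_le_iff₀ hpos).1 hn]
  obtain ⟨k, hk⟩ := htrans g'
  obtain ⟨N, hN⟩ := exists_nat_ge ((t₀ - k) / χ a)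
  -- `(a ^ N)⁻¹` pushes `(-∞, t₀]` into the half-line on which `g'` is a translation
  have hy : a ^ N * g' * (a ^ N)⁻¹ ∈ X := by
    have hb := ha.pow hpos.le N
    have hconj : χ (a ^ N * g' * (a ^ N)⁻¹) = N * χ a + χ g' + -(N * χ a) := by
      rw [hχ, hχ, hχ.map_inv, hχ.map_pow]
    show IsTranslBelow _ _ _
    rw [hconj, map_mul, map_mul, map_inv, map_pow]
    have hg'b := hb.mul (hk.mono (k' := t₀ - N * χ a) (by linarith [(div_le_iff₀ hpos).1 hN]))
      (by linarith)
    exact hg'b.mul (hb.inv.mono (by linarith)) (by linarith)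
  have hg : g = (a ^ N)⁻¹ * (a ^ N * g' * (a ^ N)⁻¹) * a ^ N * a ^ n := by
    rw [hg'_def]
    group
  rw [hg]
  exact mul_mem (mul_mem (mul_mem (inv_mem (pow_mem haX N)) (Subgroup.subset_closure hy))
    (pow_mem haX N)) (pow_mem haX n)

theorem isTranslBelow_inv_of_cayleyConnected (hχ : IsChar χ) {X : Set Γ} {t₀ : ℝ}
    (hX : ∀ x ∈ X, IsTranslBelow (ι x) t₀ (χ x)) (hconn : CayleyConnected X χ) {g : Γ}
    (hg : 0 ≤ χ g) : IsTranslBelow (ι g⁻¹) t₀ (-χ g) := by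
  induction hconn 1 g hχ.map_one.ge hg with
  | refl => simpa [hχ.map_one] using IsTranslBelow.one t₀
  | @tail u v _ hstep ih =>
    obtain ⟨hu, hv, x, hx, rfl | rfl⟩ := hstep
    · rw [mul_inv_rev, map_mul, map_inv, hχ]
      convert (hX x hx).inv.mul (ih hu) (by linarith [hχ u x]) using 1
      ring
    · rw [show v⁻¹ = x * (v * x)⁻¹ by group, map_mul]
      convert (hX x hx).mul (ih hu) (by linarith) using 1
      rw [hχ]
      ring

theorem exists_forall_apply_eq_of_normal (hmono : ∀ g, StrictMono (ι g)) (K : Subgroup Γ)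
    [hK : K.Normal] {t₀ : ℝ} (hfix : ∀ n ∈ K, ∀ s ≤ t₀, ι n s = s) (hne : ∃ n ∈ K, ι n ≠ 1) :
    ∃ Q, ∀ g, ι g Q = Q := by
  set S := {t | ∀ n ∈ K, ∀ s < t, ι n s = s}
  have ht₀ : t₀ ∈ S := fun n hn s hs => hfix n hn s hs.le
  have hbdd : BddAbove S := by
    obtain ⟨n, hn, hn1⟩ := hne
    obtain ⟨s, hs⟩ : ∃ s, ι n s ≠ s := by
      by_contra! h
      exact hn1 (Equiv.ext h)
    exact ⟨s, fun t ht => not_lt.1 fun hst => hs (ht n hn s hst)⟩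
  have hQ : sSup S ∈ S := fun n hn s hs => by
    obtain ⟨t, ht, hst⟩ := exists_lt_of_lt_csSup ⟨t₀, ht₀⟩ hs
    exact ht n hn s hst
  have hle : ∀ g, ι g (sSup S) ≤ sSup S := fun g => le_csSup hbdd fun n hn s hs => by
    have hlt : ι g⁻¹ s < sSup S := by
      rwa [← (hmono g).lt_iff_lt, map_inv, Equiv.Perm.coe_inv, Equiv.apply_symm_apply]
    have := hQ _ (hK.conj_mem n hn g⁻¹) _ hlt
    simp only [map_mul, map_inv, inv_inv, Equiv.Perm.mul_apply, Equiv.Perm.coe_inv,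
      Equiv.apply_symm_apply] at this
    exact (ι g).symm.injective this
  refine ⟨sSup S, fun g => le_antisymm (hle g) ?_⟩
  simpa using (hmono g).monotone (hle g⁻¹)

theorem not_memSigma1_of_isTranslBelow (hι : Injective ι) (hmono : ∀ g, StrictMono (ι g))
    (htrans : ∀ g, ∃ k, IsTranslBelow (ι g) k (χ g)) (hna : ∃ g h : Γ, g * h ≠ h * g)
    (hirr : ∀ t, ∃ g, ι g t ≠ t) (hne : ∃ g, χ g ≠ 0) : ¬ MemSigma1 χ := by
  intro hmem
  have hχ : IsChar χ := isChar_of_isTranslBelow ι htrans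
  obtain ⟨a, ha⟩ : ∃ a, 0 < χ a := by
    obtain ⟨g, hg⟩ := hne
    rcases hg.lt_or_gt with h | h
    · exact ⟨g⁻¹, by rw [hχ.map_inv]; linarith⟩
    · exact ⟨g, h⟩
  obtain ⟨t₀, ht₀⟩ := htrans a
  have hconn := hmem _ (closure_isTranslBelow_eq_top ι hχ htrans ht₀ ha)
  have hker : ∀ n ∈ hχ.toMonoidHom.ker, ∀ s ≤ t₀, ι n s = s := by
    intro n hn s hs
    rw [hχ.mem_ker_toMonoidHom] at hn
    have := isTranslBelow_inv_of_cayleyConnected ι hχ (fun x hx => hx) hconn (g := n⁻¹)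
      (by rw [hχ.map_inv, hn, neg_zero])
    simpa [hχ.map_inv, hn] using this s hs
  obtain ⟨g, h, hgh⟩ := hna
  have hc : g * h * (h * g)⁻¹ ∈ hχ.toMonoidHom.ker := by
    rw [hχ.mem_ker_toMonoidHom, hχ, hχ.map_inv, hχ, hχ]
    ring
  obtain ⟨Q, hQ⟩ := exists_forall_apply_eq_of_normal ι hmono _ hker
    ⟨_, hc, (map_ne_one_iff ι hι).2 (mul_inv_eq_one.not.2 hgh)⟩
  obtain ⟨g, hg⟩ := hirr Q
  exact hg (hQ g)

end Action

def reflect : Equiv.Perm ℝ ≃* Equiv.Perm ℝ := MulAut.conj (Equiv.neg ℝ)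

theorem reflect_apply (f : Equiv.Perm ℝ) (t : ℝ) : reflect f t = -f (-t) := by
  simp [reflect, MulAut.conj_apply, Equiv.Perm.mul_apply, Equiv.Perm.inv_def]

theorem strictMono_reflect {f : Equiv.Perm ℝ} (hf : StrictMono f) : StrictMono (reflect f) :=
  fun s t hst => by simpa [reflect_apply] using hf (neg_lt_neg hst)

theorem isTranslBelow_reflect {f : Equiv.Perm ℝ} {k τ : ℝ} (h : ∀ t, k ≤ t → f t = t + τ) :
    IsTranslBelow (reflect f) (-k) (-τ) := by
  intro t ht
  rw [reflect_apply, h _ (by linarith)]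
  ring

/-- **Proposition (Statement 18).** Let `G ≤ PL_o(ℝ)` be non-abelian and irreducible,
with every element of `im λ ∪ im ρ` a translation, and let `τ_ℓ`, `τ_r` send `g` to
the amplitudes of `λ(g)`, `ρ(g)`. If `τ_ℓ` is non-zero then `[τ_ℓ] ∉ Σ¹(G)`; if
`τ_r` is non-zero then `[−τ_r] ∉ Σ¹(G)`. -/
theorem tauL_negTauR_not_memSigma1_line
    (G : Subgroup (Equiv.Perm ℝ)) (hG : (G : Set (Equiv.Perm ℝ)) ⊆ PLo (univ : Set ℝ))
    (hna : ∃ g ∈ G, ∃ h ∈ G, g * h ≠ h * g)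
    (hirr : ∀ t : ℝ, ∃ g ∈ G, g t ≠ t)
    (htrans : ∀ g ∈ G, (∃ τ k : ℝ, ∀ t : ℝ, t ≤ k → g t = t + τ) ∧
        (∃ τ k : ℝ, ∀ t : ℝ, k ≤ t → g t = t + τ)) :
    ((∃ g : G, amplBot (⇑(g : Equiv.Perm ℝ)) ≠ 0) →
      ¬ MemSigma1 (fun g : G => amplBot (⇑(g : Equiv.Perm ℝ)))) ∧
    ((∃ g : G, amplTop (⇑(g : Equiv.Perm ℝ)) ≠ 0) →
      ¬ MemSigma1 (fun g : G => -amplTop (⇑(g : Equiv.Perm ℝ)))) := by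
  have hmono (g : G) : StrictMono (g : Equiv.Perm ℝ) := (hG g.2).1
  have hna' : ∃ g h : G, g * h ≠ h * g := by
    obtain ⟨g, hg, h, hh, hgh⟩ := hna
    exact ⟨⟨g, hg⟩, ⟨h, hh⟩, fun e => hgh (congrArg Subtype.val e)⟩
  constructor
  · refine fun hne => not_memSigma1_of_isTranslBelow G.subtype G.subtype_injective hmono
      (fun g => ?_) hna' (fun t => ?_) hne
    · obtain ⟨⟨τ, k, hk⟩, -⟩ := htrans g g.2
      exact ⟨k, by rwa [IsTranslBelow.amplBot_eq hk]⟩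
    · obtain ⟨g, hg, hgt⟩ := hirr t
      exact ⟨⟨g, hg⟩, hgt⟩
  · refine fun ⟨g, hg⟩ => not_memSigma1_of_isTranslBelow (reflect.toMonoidHom.comp G.subtype)
      (reflect.injective.comp G.subtype_injective) (fun g => strictMono_reflect (hmono g))
      (fun g => ?_) hna' (fun t => ?_) ⟨g, neg_ne_zero.2 hg⟩
    · obtain ⟨-, τ, k, hk⟩ := htrans g g.2
      exact ⟨-k, by rw [amplTop_eq_of_forall_ge hk]; exact isTranslBelow_reflect hk⟩
    · obtain ⟨g, hg, hgt⟩ := hirr (-t)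
      exact ⟨⟨g, hg⟩, fun h => hgt (by simp [reflect_apply] at h; linarith)⟩
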